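/- Adjoint stress tensor identity at the no-slip wall: let u(t,·) be a jointly C² family of admissible states (ρ > 0) on a neighborhood of x ∈ ℝ² with v(0,x) = 0, such that the relation T(t,·)κ = (μγ/Pr)(E(t,·) − ½‖v(t,·)‖²) holds for all t with constant κ, μ, γ, Pr. Let n ∈ ℝ² be a unit vector, z : ℝ² → ℝ⁴ a C¹ field, write z_{2,3} = (z₂, z₃), and define the adjoint stress tensor Σ := μ( ∇z_{2,3} + (∇z_{2,3})ᵀ − (2/3)(∇·z_{2,3}) I ). Let G be the homogeneity tensor evaluated at u(0,x) (so v = 0) and let u' = (ρ', ρv₁', ρv₂', (ρE)') denote the local shape derivative of the conserved variables at x. Then Σ_{i,j,k,l} u'_j n_l G^{ij}_{kl} ∂z_i/∂x_k = v'·(Σ n) + κ T' (n·∇z₄) at x, where in particular κT' = (μγ/Pr) E' holds at x. -/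

import Mathlib

open MeasureTheory

noncomputable section

/-- The physical domain `ℝ²`. -/
abbrev Dom := EuclideanSpace ℝ (Fin 2)

/-- The space of conserved variables `u = (ρ, ρv₁, ρv₂, ρE) ∈ ℝ⁴`. -/
abbrev St := Fin 4 → ℝ

/-- Standard basis vector of the domain. -/
def ee (k : Fin 2) : Dom := EuclideanSpace.single k 1

/-- Velocity `v_i = u_{i+1}/u_0` from conserved variables. -/
def vel (u : St) (i : Fin 2) : ℝ := u i.succ.castSucc / u 0

/-- Squared speed `‖v‖²`. -/
def kin (u : St) : ℝ := vel u 0 ^ 2 + vel u 1 ^ 2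

/-- Total energy `E = u_3/u_0`. -/
def toten (u : St) : ℝ := u 3 / u 0

/-- Pressure `p = (R/c_v) ρ (E − ½‖v‖²)`. -/
def pres (R cv : ℝ) (u : St) : ℝ := R / cv * u 0 * (toten u - kin u / 2)

/-- Enthalpy `H = E + p/ρ`. -/
def enth (R cv : ℝ) (u : St) : ℝ := toten u + pres R cv u / u 0

/-- Temperature `T = (E − ½‖v‖²)/c_v`. -/
def temp (cv : ℝ) (u : St) : ℝ := (toten u - kin u / 2) / cv

/-- `∂v_i/∂x_l` expressed in terms of `(u, ∇u)`, where `g l = ∂u/∂x_l`. -/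
def dvel (u : St) (g : Fin 2 → St) (i l : Fin 2) : ℝ :=
  (g l i.succ.castSucc * u 0 - u i.succ.castSucc * g l 0) / u 0 ^ 2

/-- `∂E/∂x_l` expressed in terms of `(u, ∇u)`. -/
def dtoten (u : St) (g : Fin 2 → St) (l : Fin 2) : ℝ :=
  (g l 3 * u 0 - u 3 * g l 0) / u 0 ^ 2

/-- `∂T/∂x_l` expressed in terms of `(u, ∇u)`. -/
def dtemp (cv : ℝ) (u : St) (g : Fin 2 → St) (l : Fin 2) : ℝ :=
  (dtoten u g l - (vel u 0 * dvel u g 0 l + vel u 1 * dvel u g 1 l)) / cv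

/-- Viscous stress tensor `τ = μ(∇v + (∇v)ᵀ − (2/3)(∇·v)I)` in terms of `(u, ∇u)`. -/
def tauC (μ : ℝ) (u : St) (g : Fin 2 → St) (i j : Fin 2) : ℝ :=
  μ * (dvel u g i j + dvel u g j i
    - 2 / 3 * (dvel u g 0 0 + dvel u g 1 1) * (if i = j then 1 else 0))

/-- Convective fluxes `F^c = (f₁^c, f₂^c)` as a function of the conserved variables. -/
def Fc (R cv : ℝ) (u : St) (k : Fin 2) : St :=
  ![u 0 * vel u k,
    u 0 * vel u 0 * vel u k + (if k = 0 then pres R cv u else 0),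
    u 0 * vel u 1 * vel u k + (if k = 1 then pres R cv u else 0),
    u 0 * enth R cv u * vel u k]

/-- Viscous fluxes `F^v = (f₁^v, f₂^v)` as a function of `(u, ∇u)`. -/
def Fv (μ κ cv : ℝ) (u : St) (g : Fin 2 → St) (k : Fin 2) : St :=
  ![0,
    tauC μ u g 0 k,
    tauC μ u g 1 k,
    (∑ j, tauC μ u g k j * vel u j) + κ * dtemp cv u g k]

/-- Spatial derivative `∂u/∂x_k` of a field. -/
def Du (u : Dom → St) (x : Dom) (k : Fin 2) : St := fderiv ℝ u x (ee k)

/-- Divergence `∇·Φ = Σ_k ∂Φ_k/∂x_k` of a (two-component, `St`-valued) flux field. -/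
def divF (Φ : Dom → Fin 2 → St) (x : Dom) : St :=
  ∑ k, fderiv ℝ (fun y => Φ y k) x (ee k)

/-- Homogeneity tensor `G^{ij}_{kl} = ∂(f^v_k)_i/∂(∂u_j/∂x_l)`. -/
def Ghom (μ κ cv : ℝ) (u : St) (g : Fin 2 → St) (k l : Fin 2) (i j : Fin 4) : ℝ :=
  fderiv ℝ (fun g' => Fv μ κ cv u g' k i) g (Pi.single l (Pi.single j 1))

/-- The adjoint stress tensor `Σ = μ(∇z_{2,3} + (∇z_{2,3})ᵀ − (2/3)(∇·z_{2,3})I)` of a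
`ℝ⁴`-valued field `z`, at a point `x`. -/
def adjStress (μ : ℝ) (z : Dom → St) (x : Dom) (i j : Fin 2) : ℝ :=
  μ * (fderiv ℝ (fun y => z y i.succ.castSucc) x (ee j)
    + fderiv ℝ (fun y => z y j.succ.castSucc) x (ee i)
    - 2 / 3 * (fderiv ℝ (fun y => z y 1) x (ee 0) + fderiv ℝ (fun y => z y 2) x (ee 1))
        * (if i = j then 1 else 0))

theorem IsLinearMap.fderiv_apply {𝕜 E F : Type*} [NontriviallyNormedField 𝕜] [CompleteSpace 𝕜]
    [NormedAddCommGroup E] [NormedSpace 𝕜 E] [FiniteDimensional 𝕜 E]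
    [NormedAddCommGroup F] [NormedSpace 𝕜 F] {φ : E → F}
    (h : IsLinearMap 𝕜 φ) (g d : E) : fderiv 𝕜 φ g d = φ d :=
  congrArg (· d) (LinearMap.toContinuousLinearMap (h.mk' φ)).fderiv

theorem sum_smul_single_single {ι κ R : Type*} [Fintype ι] [Fintype κ] [DecidableEq ι]
    [DecidableEq κ] [CommSemiring R] (a : κ → R) (n : ι → R) :
    ∑ j, ∑ l, (a j * n l) • Pi.single l (Pi.single j 1) = fun l => n l • a := by
  ext l j
  simp [Finset.sum_apply, Pi.single_apply, mul_comm]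

theorem EuclideanSpace.map_eq_sum_mul_single {𝕜 ι : Type*} [RCLike 𝕜] [Fintype ι] [DecidableEq ι]
    (L : EuclideanSpace 𝕜 ι →L[𝕜] 𝕜) (n : EuclideanSpace 𝕜 ι) :
    L n = ∑ k, n k * L (EuclideanSpace.single k 1) := by
  conv_lhs => rw [← (EuclideanSpace.basisFun ι 𝕜).sum_repr n]
  simp

theorem isLinearMap_Fv (μ κ cv : ℝ) (u : St) (k : Fin 2) (i : Fin 4) :
    IsLinearMap ℝ (fun g : Fin 2 → St => Fv μ κ cv u g k i) := by
  constructor <;> intros <;> fin_cases k <;> fin_cases i <;>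
    simp [Fv, tauC, dtemp, dvel, dtoten, Fin.sum_univ_two] <;> ring

theorem sum_mul_Ghom (μ κ cv : ℝ) (u : St) (g : Fin 2 → St) (a : St) (n : Fin 2 → ℝ)
    (k : Fin 2) (i : Fin 4) :
    ∑ j, ∑ l, a j * n l * Ghom μ κ cv u g k l i j = Fv μ κ cv u (fun l => n l • a) k i := by
  let L := (isLinearMap_Fv μ κ cv u k i).mk'
  have hG : ∀ l j, Ghom μ κ cv u g k l i j = L (Pi.single l (Pi.single j 1)) := fun l j =>
    (isLinearMap_Fv μ κ cv u k i).fderiv_apply g _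
  calc ∑ j, ∑ l, a j * n l * Ghom μ κ cv u g k l i j
      = L (∑ j, ∑ l, (a j * n l) • Pi.single l (Pi.single j 1)) := by
        simp only [hG, map_sum, map_smul, smul_eq_mul]
    _ = Fv μ κ cv u (fun l => n l • a) k i := by rw [sum_smul_single_single]; rfl

theorem vel_eq_zero_of_momentum {u : St} (hm : ∀ i : Fin 2, u i.succ.castSucc = 0) (i : Fin 2) :
    vel u i = 0 := by
  rw [vel, hm, zero_div]

theorem dvel_rankOne {u : St} (hm : ∀ i : Fin 2, u i.succ.castSucc = 0) (h0 : u 0 ≠ 0)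
    (a : St) (n : Fin 2 → ℝ) (i l : Fin 2) :
    dvel u (fun l => n l • a) i l = n l * (a i.succ.castSucc / u 0) := by
  simp only [dvel, hm, Pi.smul_apply, smul_eq_mul]
  field_simp
  ring

theorem dtemp_rankOne {u : St} (hm : ∀ i : Fin 2, u i.succ.castSucc = 0)
    (cv : ℝ) (a : St) (n : Fin 2 → ℝ) (k : Fin 2) :
    dtemp cv u (fun l => n l • a) k = n k * ((a 3 * u 0 - u 3 * a 0) / u 0 ^ 2 / cv) := by
  simp only [dtemp, dtoten, vel_eq_zero_of_momentum hm, Pi.smul_apply, smul_eq_mul]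
  ring

theorem sum_Fv_rankOne_mul {u : St} (hm : ∀ i : Fin 2, u i.succ.castSucc = 0) (h0 : u 0 ≠ 0)
    (μ κ cv : ℝ) (a : St) (n : Fin 2 → ℝ) (D : Fin 4 → Fin 2 → ℝ) :
    ∑ i, ∑ k, Fv μ κ cv u (fun l => n l • a) k i * D i k
      = ∑ i : Fin 2, a i.succ.castSucc / u 0 * ∑ k, μ * (D i.succ.castSucc k
          + D k.succ.castSucc i - 2 / 3 * (D 1 0 + D 2 1) * (if i = k then 1 else 0)) * n k
        + κ * ((a 3 * u 0 - u 3 * a 0) / u 0 ^ 2 / cv) * ∑ k, n k * D 3 k := by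
  simp [Fin.sum_univ_four, Fin.sum_univ_two, Fv, tauC, dvel_rankOne hm h0, dtemp_rankOne hm,
    vel_eq_zero_of_momentum hm]
  ring

section Curve

variable {c : ℝ → St} {a : St} {t : ℝ}

theorem hasDerivAt_toten (hc : HasDerivAt c a t) (h0 : c t 0 ≠ 0) :
    HasDerivAt (fun s => toten (c s)) ((a 3 * c t 0 - c t 3 * a 0) / c t 0 ^ 2) t :=
  (hasDerivAt_pi.1 hc 3).div (hasDerivAt_pi.1 hc 0) h0

theorem hasDerivAt_vel_of_momentum (hc : HasDerivAt c a t)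
    (hm : ∀ i : Fin 2, c t i.succ.castSucc = 0) (h0 : c t 0 ≠ 0) (i : Fin 2) :
    HasDerivAt (fun s => vel (c s) i) (a i.succ.castSucc / c t 0) t := by
  refine ((hasDerivAt_pi.1 hc i.succ.castSucc).div (hasDerivAt_pi.1 hc 0) h0).congr_deriv ?_
  rw [hm]
  field_simp
  ring

theorem hasDerivAt_kin_of_momentum (hc : HasDerivAt c a t)
    (hm : ∀ i : Fin 2, c t i.succ.castSucc = 0) (h0 : c t 0 ≠ 0) :
    HasDerivAt (fun s => kin (c s)) 0 t := by
  refine (((hasDerivAt_vel_of_momentum hc hm h0 0).pow 2).add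
    ((hasDerivAt_vel_of_momentum hc hm h0 1).pow 2)).congr_deriv ?_
  simp [vel_eq_zero_of_momentum hm]

theorem hasDerivAt_temp_of_momentum (cv : ℝ) (hc : HasDerivAt c a t)
    (hm : ∀ i : Fin 2, c t i.succ.castSucc = 0) (h0 : c t 0 ≠ 0) :
    HasDerivAt (fun s => temp cv (c s)) ((a 3 * c t 0 - c t 3 * a 0) / c t 0 ^ 2 / cv) t := by
  simpa [temp] using ((hasDerivAt_toten hc h0).sub
    ((hasDerivAt_kin_of_momentum hc hm h0).div_const 2)).div_const cv

end Curve

theorem stmt_12_general (cv μ κ γ Pr : ℝ)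
    (δ : ℝ) (hδ : 0 < δ) (U : Set Dom) (hU : IsOpen U) (x : Dom) (hx : x ∈ U)
    (u : ℝ → Dom → St)
    (hu : ContDiffOn ℝ 2 (fun q : ℝ × Dom => u q.1 q.2) (Set.Ioo (-δ) δ ×ˢ U))
    (hρ : ∀ t ∈ Set.Ioo (-δ) δ, ∀ y ∈ U, 0 < u t y 0)
    (hκrel : ∀ t ∈ Set.Ioo (-δ) δ, ∀ y ∈ U,
      κ * temp cv (u t y) = μ * γ / Pr * (toten (u t y) - kin (u t y) / 2))
    (hv1 : u 0 x 1 = 0) (hv2 : u 0 x 2 = 0)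
    (n : Dom)
    (z : Dom → St) :
    (∑ i : Fin 4, ∑ j : Fin 4, ∑ k : Fin 2, ∑ l : Fin 2,
        deriv (fun t => u t x j) 0 * n l
          * Ghom μ κ cv (u 0 x) (Du (u 0) x) k l i j
          * fderiv ℝ (fun y => z y i) x (ee k))
      = (∑ i : Fin 2, deriv (fun t => vel (u t x) i) 0
            * (∑ j, adjStress μ z x i j * n j))
        + κ * deriv (fun t => temp cv (u t x)) 0 * fderiv ℝ (fun y => z y 3) x n
    ∧ κ * deriv (fun t => temp cv (u t x)) 0
        = μ * γ / Pr * deriv (fun t => toten (u t x)) 0 := by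
  have h0I : (0 : ℝ) ∈ Set.Ioo (-δ) δ := ⟨neg_neg_iff_pos.2 hδ, hδ⟩
  have hdiff : DifferentiableAt ℝ (fun q : ℝ × Dom => u q.1 q.2) (0, x) :=
    (hu.contDiffAt ((isOpen_Ioo.prod hU).mem_nhds ⟨h0I, hx⟩)).differentiableAt (by norm_num)
  have hc : HasDerivAt (fun t => u t x) (deriv (fun t => u t x) 0) 0 :=
    (hdiff.comp (0 : ℝ) (f := fun t : ℝ => (t, x))
      (differentiableAt_id.prodMk (differentiableAt_const x))).hasDerivAt
  set a := deriv (fun t => u t x) 0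
  have hm : ∀ i : Fin 2, u 0 x i.succ.castSucc = 0 := Fin.forall_fin_two.2 ⟨hv1, hv2⟩
  have h0 : u 0 x 0 ≠ 0 := (hρ 0 h0I x hx).ne'
  have hT := hasDerivAt_temp_of_momentum cv hc hm h0
  refine ⟨?_, ?_⟩
  · calc _ = ∑ i, ∑ k, (∑ j, ∑ l, a j * n l * Ghom μ κ cv (u 0 x) (Du (u 0) x) k l i j)
          * fderiv ℝ (fun y => z y i) x (ee k) := by
          simp only [fun j => (hasDerivAt_pi.1 hc j).deriv, Finset.sum_mul]
          exact Finset.sum_congr rfl fun i _ => Finset.sum_comm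
      _ = _ := by
          simp only [sum_mul_Ghom, sum_Fv_rankOne_mul hm h0, hT.deriv,
            fun i => (hasDerivAt_vel_of_momentum hc hm h0 i).deriv,
            EuclideanSpace.map_eq_sum_mul_single (fderiv ℝ (fun y => z y 3) x) n]
          rfl
  · have hrel : (fun t => κ * temp cv (u t x)) =ᶠ[nhds 0]
        fun t => μ * γ / Pr * (toten (u t x) - kin (u t x) / 2) :=
      Filter.eventually_of_mem (Ioo_mem_nhds (neg_neg_iff_pos.2 hδ) hδ) fun t ht => hκrel t ht x hx
    have hE := hasDerivAt_toten hc h0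
    have hK := hasDerivAt_kin_of_momentum hc hm h0
    have hderiv := ((hT.const_mul κ).congr_of_eventuallyEq hrel.symm).unique
      ((hE.sub (hK.div_const 2)).const_mul (μ * γ / Pr))
    rw [hT.deriv, hE.deriv, hderiv]
    ring

/-- adjoint stress tensor identity at the no-slip wall.
For a jointly `C²` family of admissible states with `v(0,x) = 0` satisfying
`Tκ = (μγ/Pr)(E − ½‖v‖²)` for all `t`, a unit vector `n` and a `C¹` field `z`,
`Σ_{i,j,k,l} u'_j n_l G^{ij}_{kl} ∂z_i/∂x_k = v'·(Σn) + κT'(n·∇z₄)` at `x`,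
where moreover `κT' = (μγ/Pr)E'` at `x`. -/
theorem stmt_12 (R cv μ κ γ Pr : ℝ) (hcv : 0 < cv) (hμ : 0 < μ) (hγ : 0 < γ) (hPr : 0 < Pr)
    (δ : ℝ) (hδ : 0 < δ) (U : Set Dom) (hU : IsOpen U) (x : Dom) (hx : x ∈ U)
    (u : ℝ → Dom → St)
    (hu : ContDiffOn ℝ 2 (fun q : ℝ × Dom => u q.1 q.2) (Set.Ioo (-δ) δ ×ˢ U))
    (hρ : ∀ t ∈ Set.Ioo (-δ) δ, ∀ y ∈ U, 0 < u t y 0)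
    (hκrel : ∀ t ∈ Set.Ioo (-δ) δ, ∀ y ∈ U,
      κ * temp cv (u t y) = μ * γ / Pr * (toten (u t y) - kin (u t y) / 2))
    (hv1 : u 0 x 1 = 0) (hv2 : u 0 x 2 = 0)
    (n : Dom) (hn : ‖n‖ = 1)
    (z : Dom → St) (hz : ContDiff ℝ 1 z) :
    (∑ i : Fin 4, ∑ j : Fin 4, ∑ k : Fin 2, ∑ l : Fin 2,
        deriv (fun t => u t x j) 0 * n l
          * Ghom μ κ cv (u 0 x) (Du (u 0) x) k l i j
          * fderiv ℝ (fun y => z y i) x (ee k))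
      = (∑ i : Fin 2, deriv (fun t => vel (u t x) i) 0
            * (∑ j, adjStress μ z x i j * n j))
        + κ * deriv (fun t => temp cv (u t x)) 0 * fderiv ℝ (fun y => z y 3) x n
    ∧ κ * deriv (fun t => temp cv (u t x)) 0
        = μ * γ / Pr * deriv (fun t => toten (u t x)) 0 :=
  stmt_12_general cv μ κ γ Pr δ hδ U hU x hx u hu hρ hκrel hv1 hv2 n z

end
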